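/- arXiv:1802.07823 — 2 statements merged into one kernel-verified Lean document; each statement's English description precedes it below -/
import Mathlib

section
/- Let p ≥ 0 be real, λ > 0 real, γ, σ complex with σ ≠ 1, a real with a > 0, ϑ, υ complex with Re(υ) > Re(ϑ) > 0, z complex with |z| < 1, and t complex with |t| < a. Then the generating relation ∑_{n=0}^∞ ((σ)_n/n!) Φ_{γ,ϑ;υ}(z,σ+n,a;p,λ) · t^n = Φ_{γ,ϑ;υ}(z,σ,a−t;p,λ) holds. -/
open MeasureTheory Set Filter

/-- Mittag-Leffler function `E_λ(z) = ∑ z^n / Γ(λ n + 1)`. -/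
noncomputable def mittagLeffler (lam : ℝ) (z : ℂ) : ℂ :=
  ∑' n : ℕ, z ^ n / (Real.Gamma (lam * n + 1) : ℂ)

/-- Extended beta function `B(x,y;p,λ)`. -/
noncomputable def extBeta (x y : ℂ) (p lam : ℝ) : ℂ :=
  ∫ t in (0:ℝ)..1, (t : ℂ) ^ (x - 1) * ((1 : ℂ) - (t : ℂ)) ^ (y - 1) *
    mittagLeffler lam (-(p : ℂ) / ((t : ℂ) * (1 - (t : ℂ))))

/-- Classical beta function `B(x,y) = B(x,y;0,1)`. -/
noncomputable def classicalBeta (x y : ℂ) : ℂ := extBeta x y 0 1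

/-- Pochhammer symbol `(x)_n = x (x+1) ⋯ (x+n-1)`. -/
noncomputable def poch (x : ℂ) (n : ℕ) : ℂ := (ascPochhammer ℂ n).eval x

/-- Extended Hurwitz–Lerch zeta function `Φ_{γ,ϑ;υ}(z,σ,a;p,λ)`. -/
noncomputable def extHLZeta (γ ϑ υ z σ a : ℂ) (p lam : ℝ) : ℂ :=
  ∑' n : ℕ, poch γ n * extBeta (ϑ + n) (υ - ϑ) p lam /
    (classicalBeta ϑ (υ - ϑ) * (n.factorial : ℂ)) * z ^ n / ((n : ℂ) + a) ^ σ

/-- Extended Gauss hypergeometric function `F_p^λ(γ,ϑ;υ;z)`. -/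
noncomputable def extHyper (γ ϑ υ : ℂ) (p lam : ℝ) (z : ℂ) : ℂ :=
  ∑' n : ℕ, poch γ n * extBeta (ϑ + n) (υ - ϑ) p lam /
    classicalBeta ϑ (υ - ϑ) * z ^ n / (n.factorial : ℂ)

/-- Goyal–Laddha Hurwitz–Lerch zeta function `Φ*_γ(z,σ,a)`. -/
noncomputable def goyalLaddha (γ z σ a : ℂ) : ℂ :=
  ∑' n : ℕ, poch γ n / (n.factorial : ℂ) * z ^ n / ((n : ℂ) + a) ^ σ

/-- Limiting case `Φ*_{ϑ;υ}(z,σ,a;p,λ)`. -/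
noncomputable def limitHLZeta (ϑ υ z σ a : ℂ) (p lam : ℝ) : ℂ :=
  ∑' n : ℕ, extBeta (ϑ + n) (υ - ϑ) p lam /
    (classicalBeta ϑ (υ - ϑ) * (n.factorial : ℂ)) * z ^ n / ((n : ℂ) + a) ^ σ

/-- Garg Hurwitz–Lerch zeta function `Φ_{γ,ϑ;υ}(z,σ,a)`. -/
noncomputable def gargZeta (γ ϑ υ z σ a : ℂ) : ℂ :=
  ∑' n : ℕ, poch γ n * poch ϑ n / (poch υ n * (n.factorial : ℂ)) *
    z ^ n / ((n : ℂ) + a) ^ σ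

/-!
Write `Φ(σ, a) = ∑ₖ cₖ / (k + a)^σ`. Since `k + a > 0` and `‖t‖ < a ≤ k + a`, the binomial series
gives `(k + a - t)^(-σ) = ∑ₙ (σ)ₙ / n! · tⁿ / (k + a)^(σ + n)`. Multiplying by `cₖ` and summing over
`k` yields a double series dominated by `∑ₙ ‖(σ)ₙ / n!‖ (‖t‖ / a)ⁿ · ∑ₖ ‖cₖ / (k + a)^σ‖`, so the
two summations can be interchanged. For the extended Hurwitz–Lerch zeta function the second factor
is finite: `B(ϑ + k, υ - ϑ; p, λ)` is eventually bounded in `k` (multiplying the integrand by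
`sᵏ` only shrinks it on `(0, 1]`, and a non-integrable integrand has integral `0`), while
`(k + a)^(-σ)` grows polynomially and is absorbed by `zᵏ`, `‖z‖ < 1`.
-/

open Asymptotics Topology
open scoped Nat

lemma poch_eq_factorial_mul_choose (σ : ℂ) (n : ℕ) :
    poch σ n = n ! * Ring.choose (σ + n - 1) n := by
  rw [poch, ← Polynomial.ascPochhammer_smeval_eq_eval, ← nsmul_eq_mul,
    ← Ring.descPochhammer_eq_factorial_smul_choose,
    Polynomial.descPochhammer_smeval_eq_ascPochhammer]
  ring_nf

theorem hasFPowerSeriesOnBall_one_div_one_sub_cpow (σ : ℂ) :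
    HasFPowerSeriesOnBall (fun w ↦ 1 / (1 - w) ^ σ)
      (.ofScalars ℂ fun n ↦ poch σ n / n !) 0 1 := by
  have hcoeff : (fun n : ℕ ↦ poch σ n / n !) = fun n : ℕ ↦ Ring.choose (σ + n - 1) n := by
    ext n
    rw [poch_eq_factorial_mul_choose,
      mul_div_cancel_left₀ _ (by exact_mod_cast n.factorial_ne_zero)]
  rw [hcoeff]
  exact Complex.one_div_one_sub_cpow_hasFPowerSeriesOnBall_zero σ

lemma mem_eball_one_of_norm_lt_one {E : Type*} [SeminormedAddCommGroup E] {w : E}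
    (hw : ‖w‖ < 1) : w ∈ Metric.eball (0 : E) 1 := by
  rwa [← ENNReal.ofReal_one, Metric.eball_ofReal, Metric.mem_ball, dist_zero_right]

lemma hasSum_poch_div_factorial_mul_pow (σ : ℂ) {w : ℂ} (hw : ‖w‖ < 1) :
    HasSum (fun n ↦ poch σ n / n ! * w ^ n) (1 / (1 - w) ^ σ) := by
  have := (hasFPowerSeriesOnBall_one_div_one_sub_cpow σ).hasSum (mem_eball_one_of_norm_lt_one hw)
  simpa [FormalMultilinearSeries.ofScalars_apply_eq, mul_comm] using this

lemma summable_norm_poch_div_factorial_mul_pow (σ : ℂ) {w : ℂ} (hw : ‖w‖ < 1) :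
    Summable fun n ↦ ‖poch σ n / n ! * w ^ n‖ := by
  have := FormalMultilinearSeries.summable_norm_apply _ <| Metric.eball_subset_eball
    (hasFPowerSeriesOnBall_one_div_one_sub_cpow σ).r_le (mem_eball_one_of_norm_lt_one hw)
  simpa [FormalMultilinearSeries.ofScalars_apply_eq, mul_comm] using this

lemma summable_norm_poch_div_factorial_mul_mul_pow (σ : ℂ) {u : ℕ → ℂ} {m : ℕ}
    (hu : u =O[atTop] fun n ↦ ((n ^ m : ℕ) : ℂ)) {z : ℂ} (hz : ‖z‖ < 1) :
    Summable fun n ↦ ‖poch σ n / n ! * u n * z ^ n‖ := by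
  obtain ⟨ρ, hzρ, hρ1⟩ := exists_between hz
  have hρ : 0 < ρ := (norm_nonneg z).trans_lt hzρ
  have hbounded : (fun n ↦ u n * (z / ρ) ^ n) =O[atTop] fun _ ↦ (1 : ℂ) := by
    refine (summable_norm_mul_geometric_of_norm_lt_one' ?_ hu).of_norm.tendsto_atTop_zero
      |>.isBigO_one ℂ
    rwa [norm_div, Complex.norm_real, Real.norm_of_nonneg hρ.le, div_lt_one hρ]
  refine summable_of_isBigO_nat (summable_norm_poch_div_factorial_mul_pow σ
    (w := ρ) (by simpa [abs_of_pos hρ] using hρ1)) ?_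
  refine (((isBigO_refl (fun n ↦ poch σ n / n ! * (ρ : ℂ) ^ n) atTop).mul hbounded).congr
    (fun n ↦ ?_) (fun n ↦ mul_one _)).norm_left.norm_right
  have : (ρ : ℂ) ^ n ≠ 0 := pow_ne_zero _ (by exact_mod_cast hρ.ne')
  rw [div_pow]
  field_simp

lemma Complex.ofReal_mul_cpow {x : ℝ} (hx : 0 ≤ x) (u s : ℂ) :
    ((x : ℂ) * u) ^ s = (x : ℂ) ^ s * u ^ s := by
  rcases eq_or_ne s 0 with rfl | hs
  · simp
  rcases hx.eq_or_lt with rfl | hx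
  · simp [Complex.zero_cpow hs]
  rcases eq_or_ne u 0 with rfl | hu
  · simp [Complex.zero_cpow hs]
  have hx' : (x : ℂ) ≠ 0 := Complex.ofReal_ne_zero.2 hx.ne'
  rw [Complex.cpow_def_of_ne_zero (mul_ne_zero hx' hu), Complex.log_ofReal_mul hx hu,
    Complex.ofReal_log hx.le, add_mul, Complex.exp_add, ← Complex.cpow_def_of_ne_zero hx',
    ← Complex.cpow_def_of_ne_zero hu]

lemma hasSum_poch_div_factorial_mul_pow_div_cpow (σ : ℂ) {x : ℝ} (hx : 0 < x) {t : ℂ}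
    (ht : ‖t‖ < x) :
    HasSum (fun n ↦ poch σ n / n ! * t ^ n / (x : ℂ) ^ (σ + n)) (1 / ((x : ℂ) - t) ^ σ) := by
  have hx' : (x : ℂ) ≠ 0 := Complex.ofReal_ne_zero.2 hx.ne'
  have hw : ‖t / x‖ < 1 := by
    rwa [norm_div, Complex.norm_real, Real.norm_of_nonneg hx.le, div_lt_one hx]
  have hterm : (fun n : ℕ ↦ poch σ n / n ! * t ^ n / (x : ℂ) ^ (σ + n)) =
      fun n ↦ 1 / (x : ℂ) ^ σ * (poch σ n / n ! * (t / x) ^ n) := by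
    ext n
    rw [Complex.cpow_add _ _ hx', Complex.cpow_natCast, div_pow]
    ring
  have hsum : 1 / ((x : ℂ) - t) ^ σ = 1 / (x : ℂ) ^ σ * (1 / (1 - t / x) ^ σ) := by
    rw [show (x : ℂ) - t = x * (1 - t / x) by field_simp, Complex.ofReal_mul_cpow hx.le]
    ring
  rw [hterm, hsum]
  exact (hasSum_poch_div_factorial_mul_pow σ hw).mul_left _

noncomputable def hurwitzLerchSum (c : ℕ → ℂ) (σ a : ℂ) : ℂ :=
  ∑' k, c k / ((k : ℂ) + a) ^ σ

lemma norm_poch_div_factorial_mul_div_cpow_add_le (c : ℕ → ℂ) (σ t : ℂ) {a : ℝ} (ha : 0 < a)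
    (n k : ℕ) :
    ‖poch σ n / n ! * (c k / ((k : ℂ) + a) ^ (σ + n)) * t ^ n‖ ≤
      ‖poch σ n / n ! * ((‖t‖ / a : ℝ) : ℂ) ^ n‖ * ‖c k / ((k : ℂ) + a) ^ σ‖ := by
  have hx : 0 < (k : ℝ) + a := by positivity
  have hx' : (k : ℂ) + a ≠ 0 := by exact_mod_cast hx.ne'
  have hsplit : poch σ n / n ! * (c k / ((k : ℂ) + a) ^ (σ + n)) * t ^ n =
      poch σ n / n ! * (t / ((k : ℂ) + a)) ^ n * (c k / ((k : ℂ) + a) ^ σ) := by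
    rw [Complex.cpow_add _ _ hx', Complex.cpow_natCast, div_pow]
    ring
  rw [hsplit, norm_mul, norm_mul, norm_mul]
  gcongr
  simp only [norm_pow, norm_div, Complex.norm_real, norm_norm, Real.norm_of_nonneg ha.le]
  gcongr
  rw [show (k : ℂ) + a = ((k + a : ℝ) : ℂ) by push_cast; ring, Complex.norm_real,
    Real.norm_of_nonneg hx.le]
  linarith [k.cast_nonneg (α := ℝ)]

theorem hurwitzLerchSum_generating_sigma (c : ℕ → ℂ) (σ : ℂ) {a : ℝ} (ha : 0 < a) {t : ℂ}
    (ht : ‖t‖ < a) (hc : Summable fun k ↦ ‖c k / ((k : ℂ) + a) ^ σ‖) :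
    ∑' n : ℕ, poch σ n / n ! * hurwitzLerchSum c (σ + n) a * t ^ n =
      hurwitzLerchSum c σ (a - t) := by
  set f : ℕ → ℕ → ℂ := fun n k ↦ poch σ n / n ! * (c k / ((k : ℂ) + a) ^ (σ + n)) * t ^ n
  have hf : Summable (Function.uncurry f) := by
    have hw : ‖((‖t‖ / a : ℝ) : ℂ)‖ < 1 := by
      rwa [Complex.norm_real, Real.norm_of_nonneg (by positivity), div_lt_one ha]
    have hdom := (summable_norm_poch_div_factorial_mul_pow σ hw).mul_of_nonneg hc
      (fun _ ↦ norm_nonneg _) (fun _ ↦ norm_nonneg _)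
    exact .of_norm_bounded hdom fun p ↦ norm_poch_div_factorial_mul_div_cpow_add_le c σ t ha p.1 p.2
  have hrow (k : ℕ) : HasSum (fun n ↦ f n k) (c k / ((k : ℂ) + (a - t)) ^ σ) := by
    have hx : 0 < (k : ℝ) + a := by positivity
    have := (hasSum_poch_div_factorial_mul_pow_div_cpow σ hx
      (by linarith [k.cast_nonneg (α := ℝ)] : ‖t‖ < k + a)).mul_left (c k)
    rw [show ((k + a : ℝ) : ℂ) = k + a by push_cast; ring] at this
    rw [← add_sub_assoc, div_eq_mul_one_div]
    exact this.congr_fun fun n ↦ by ring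
  calc ∑' n : ℕ, poch σ n / n ! * hurwitzLerchSum c (σ + n) a * t ^ n
      = ∑' n, ∑' k, f n k := by
        simp only [f, hurwitzLerchSum, ← tsum_mul_left, ← tsum_mul_right]
    _ = ∑' k, ∑' n, f n k := hf.tsum_comm.symm
    _ = hurwitzLerchSum c σ (a - t) := tsum_congr fun k ↦ (hrow k).tsum_eq

lemma isBigO_one_integral_cpow_add_natCast_mul (f : ℝ → ℂ) (x : ℂ) :
    (fun k : ℕ ↦ ∫ s in (0 : ℝ)..1, (s : ℂ) ^ (x + k) * f s) =O[atTop] fun _ ↦ (1 : ℂ) := by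
  set F : ℕ → ℝ → ℂ := fun k s ↦ (s : ℂ) ^ (x + k) * f s
  by_cases hint : ∃ N, IntervalIntegrable (F N) volume 0 1
  · obtain ⟨N, hN⟩ := hint
    have hN : IntegrableOn (fun s ↦ ‖F N s‖) (Ioc 0 1) :=
      (intervalIntegrable_iff_integrableOn_Ioc_of_le zero_le_one).1 hN.norm
    have hmono {k : ℕ} (hk : N ≤ k) {s : ℝ} (hs : s ∈ Ioc 0 1) : ‖F k s‖ ≤ ‖F N s‖ := by
      simp only [F, norm_mul, Complex.norm_cpow_eq_rpow_re_of_pos hs.1, Complex.add_re,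
        Complex.natCast_re]
      exact mul_le_mul_of_nonneg_right (Real.rpow_le_rpow_of_exponent_ge hs.1 hs.2
        (by gcongr)) (norm_nonneg _)
    refine IsBigO.of_bound (∫ s in Ioc 0 1, ‖F N s‖) ?_
    filter_upwards [eventually_ge_atTop N] with k hk
    rw [norm_one, mul_one, intervalIntegral.integral_of_le zero_le_one]
    refine (norm_integral_le_integral_norm _).trans <| integral_mono_of_nonneg
      (ae_of_all _ fun _ ↦ norm_nonneg _) hN ?_
    filter_upwards [ae_restrict_mem measurableSet_Ioc] with s hs using hmono hk hs
  · push Not at hint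
    simp only [F, intervalIntegral.integral_undef (hint _)]
    exact isBigO_zero _ _

lemma isBigO_one_extBeta_add_natCast (ϑ y : ℂ) (p lam : ℝ) :
    (fun k : ℕ ↦ extBeta (ϑ + k) y p lam) =O[atTop] fun _ ↦ (1 : ℂ) := by
  refine (isBigO_one_integral_cpow_add_natCast_mul
    (fun s ↦ (1 - (s : ℂ)) ^ (y - 1) * mittagLeffler lam (-(p : ℂ) / (s * (1 - s)))) (ϑ - 1))
    |>.congr_left fun k ↦ ?_
  simp only [extBeta, mul_assoc, add_sub_right_comm ϑ]

lemma isBigO_inv_natCast_add_cpow {a : ℝ} (ha : 0 < a) (σ : ℂ) :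
    (fun k : ℕ ↦ (((k : ℂ) + a) ^ σ)⁻¹) =O[atTop]
      fun k ↦ ((k ^ ⌈-σ.re⌉₊ : ℕ) : ℂ) := by
  set m := ⌈-σ.re⌉₊
  refine IsBigO.of_bound (2 ^ m) ?_
  filter_upwards [eventually_ge_atTop ⌈a⌉₊, eventually_ge_atTop 1] with k hka hk1
  have hak : a ≤ k := Nat.ceil_le.1 hka
  have hk1 : (1 : ℝ) ≤ k := by exact_mod_cast hk1
  have hcast : (k : ℂ) + a = ((k + a : ℝ) : ℂ) := by push_cast; ring
  rw [hcast, norm_inv, Complex.norm_cpow_eq_rpow_re_of_pos (by positivity), ← Real.rpow_neg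
    (by positivity), Complex.norm_natCast]
  push_cast
  calc ((k : ℝ) + a) ^ (-σ.re) ≤ ((k : ℝ) + a) ^ (m : ℝ) :=
        Real.rpow_le_rpow_of_exponent_le (by linarith) (Nat.le_ceil _)
    _ ≤ (2 * k) ^ m := by rw [Real.rpow_natCast]; gcongr; linarith
    _ = 2 ^ m * k ^ m := mul_pow _ _ _

noncomputable def extHLZetaCoeff (γ ϑ υ z : ℂ) (p lam : ℝ) (k : ℕ) : ℂ :=
  poch γ k * extBeta (ϑ + k) (υ - ϑ) p lam / (classicalBeta ϑ (υ - ϑ) * (k ! : ℂ)) * z ^ k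

lemma extHLZeta_eq_hurwitzLerchSum (γ ϑ υ z σ a : ℂ) (p lam : ℝ) :
    extHLZeta γ ϑ υ z σ a p lam = hurwitzLerchSum (extHLZetaCoeff γ ϑ υ z p lam) σ a :=
  rfl

lemma summable_norm_extHLZetaCoeff_div_cpow (γ ϑ υ σ : ℂ) (p lam : ℝ) {z : ℂ} (hz : ‖z‖ < 1)
    {a : ℝ} (ha : 0 < a) :
    Summable fun k : ℕ ↦ ‖extHLZetaCoeff γ ϑ υ z p lam k / ((k : ℂ) + a) ^ σ‖ := by
  have hu := ((isBigO_one_extBeta_add_natCast ϑ (υ - ϑ) p lam).const_mul_left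
    (classicalBeta ϑ (υ - ϑ))⁻¹).mul (isBigO_inv_natCast_add_cpow ha σ)
  simp only [one_mul] at hu
  refine (summable_norm_poch_div_factorial_mul_mul_pow γ hu hz).congr fun k ↦ ?_
  congr 1
  simp only [extHLZetaCoeff]
  ring

theorem extHLZeta_generating_sigma_general (p lam a : ℝ) (γ σ ϑ υ z t : ℂ)
    (ha : 0 < a) (hz : ‖z‖ < 1)
    (ht : ‖t‖ < a) :
    (∑' n : ℕ, poch σ n / (n.factorial : ℂ) *
        extHLZeta γ ϑ υ z (σ + n) (a : ℂ) p lam * t ^ n) =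
      extHLZeta γ ϑ υ z σ ((a : ℂ) - t) p lam := by
  simp only [extHLZeta_eq_hurwitzLerchSum]
  exact hurwitzLerchSum_generating_sigma _ σ ha ht
    (summable_norm_extHLZetaCoeff_div_cpow γ ϑ υ σ p lam hz ha)

/-- generating relation in the parameter `σ`. -/
theorem extHLZeta_generating_sigma (p lam a : ℝ) (γ σ ϑ υ z t : ℂ)
    (hp : 0 ≤ p) (hlam : 0 < lam) (hσ : σ ≠ 1) (ha : 0 < a)
    (hϑ : 0 < ϑ.re) (hυϑ : ϑ.re < υ.re) (hz : ‖z‖ < 1)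
    (ht : ‖t‖ < a) :
    (∑' n : ℕ, poch σ n / (n.factorial : ℂ) *
        extHLZeta γ ϑ υ z (σ + n) (a : ℂ) p lam * t ^ n) =
      extHLZeta γ ϑ υ z σ ((a : ℂ) - t) p lam :=
  extHLZeta_generating_sigma_general p lam a γ σ ϑ υ z t ha hz ht
end

section
/- Let p ≥ 0 be real, λ > 0 real, γ, σ complex, a complex that is not a nonpositive integer, and ϑ, υ complex with Re(υ) > Re(ϑ) > 0. Then for every complex z with |z| < 1, the series ∑_{n=0}^∞ (γ)_n B(ϑ+n,υ−ϑ;p,λ)/(B(ϑ,υ−ϑ) n!) · z^n/(n+a)^σ defining the extended Hurwitz–Lerch zeta function Φ_{γ,ϑ;υ}(z,σ,a;p,λ) converges absolutely. -/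
open MeasureTheory Set Filter

open Topology

/-! Each factor of the general term is controlled separately. `‖(γ)_n‖ ≤ (‖γ‖)_n`; on `(0, 1]` the
integrand of `B(ϑ + n, υ - ϑ; p, λ)` is `t ^ n` times that of `B(ϑ, υ - ϑ; p, λ)`, so these values
stay bounded; and `‖(n + a) ^ σ‖⁻¹` grows at most polynomially in `n`. The resulting majorant
`(‖γ‖)_n / n! * (n + 1) ^ K * ‖z‖ ^ n` has ratio of consecutive terms tending to `‖z‖ < 1`. -/

lemma summable_of_succ_eq_mul_of_tendsto {f q : ℕ → ℝ} {l : ℝ} (hl : |l| < 1)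
    (hq : Tendsto q atTop (𝓝 l)) (hf : ∀ n, f (n + 1) = q n * f n) : Summable f := by
  obtain ⟨r, hlr, hr⟩ := exists_between hl
  refine summable_of_ratio_norm_eventually_le hr ?_
  filter_upwards [hq.abs.eventually (gt_mem_nhds hlr)] with n hn
  rw [hf, norm_mul, Real.norm_eq_abs]
  exact mul_le_mul_of_nonneg_right hn.le (norm_nonneg _)

lemma tendsto_natCast_add_div_natCast_add (a b : ℝ) :
    Tendsto (fun n : ℕ => ((n : ℝ) + a) / (n + b)) atTop (𝓝 1) := by
  have h : Tendsto (fun n : ℕ => a / ((n : ℝ) + b)) atTop (𝓝 0) :=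
    tendsto_const_nhds.div_atTop (tendsto_atTop_add_const_right _ b tendsto_natCast_atTop_atTop)
  simpa [add_div] using (tendsto_natCast_div_add_atTop b).add h

lemma summable_ascPochhammer_eval_div_factorial_mul (c r : ℝ) (K : ℕ) (hr : |r| < 1) :
    Summable fun n : ℕ => (ascPochhammer ℝ n).eval c / n.factorial * ((n : ℝ) + 1) ^ K * r ^ n := by
  refine summable_of_succ_eq_mul_of_tendsto (l := r) hr (q := fun n : ℕ =>
    ((n : ℝ) + c) / (n + 1) * (((n : ℝ) + 2) / (n + 1)) ^ K * r) ?_ fun n => ?_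
  · simpa using ((tendsto_natCast_add_div_natCast_add c 1).mul
      ((tendsto_natCast_add_div_natCast_add 2 1).pow K)).mul_const r
  · simp only [ascPochhammer_succ_eval, Nat.factorial_succ, div_pow]
    push_cast
    field_simp
    ring

lemma norm_ascPochhammer_eval_le {R : Type*} [NormedRing R] [NormOneClass R] (x : R) (n : ℕ) :
    ‖(ascPochhammer R n).eval x‖ ≤ (ascPochhammer ℝ n).eval ‖x‖ := by
  induction n with
  | zero => simp
  | succ n ih =>
    rw [ascPochhammer_succ_eval, ascPochhammer_succ_eval]
    refine (norm_mul_le _ _).trans (mul_le_mul ih ?_ (norm_nonneg _) ((norm_nonneg _).trans ih))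
    exact (norm_add_le _ _).trans (by simpa using Nat.norm_cast_le (α := R) n)

lemma norm_inv_cpow_le_of_one_le_norm {w : ℂ} (s : ℂ) (hw : 1 ≤ ‖w‖) :
    ‖(w ^ s)⁻¹‖ ≤ Real.exp (Real.pi * |s.im|) * ‖w‖ ^ ⌈|s.re|⌉₊ := by
  have hw0 : w ≠ 0 := norm_pos_iff.mp (one_pos.trans_le hw)
  rw [norm_inv, Complex.norm_cpow_of_ne_zero hw0, inv_div, div_eq_mul_inv,
    ← Real.rpow_neg (norm_nonneg _), ← Real.rpow_natCast]
  have harg : Complex.arg w * s.im ≤ Real.pi * |s.im| :=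
    calc Complex.arg w * s.im ≤ |Complex.arg w| * |s.im| := by rw [← abs_mul]; exact le_abs_self _
      _ ≤ Real.pi * |s.im| := by gcongr; exact Complex.abs_arg_le_pi w
  exact mul_le_mul (Real.exp_le_exp.2 harg)
    (Real.rpow_le_rpow_of_exponent_le hw ((neg_le_abs _).trans (Nat.le_ceil _)))
    (by positivity) (by positivity)

lemma eventually_norm_inv_natCast_add_cpow_le (a s : ℂ) :
    ∀ᶠ n : ℕ in atTop, ‖(((n : ℂ) + a) ^ s)⁻¹‖ ≤
      Real.exp (Real.pi * |s.im|) * (‖a‖ + 1) ^ ⌈|s.re|⌉₊ * ((n : ℝ) + 1) ^ ⌈|s.re|⌉₊ := by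
  filter_upwards [eventually_ge_atTop (⌈‖a‖⌉₊ + 1)] with n hn
  have ha : ‖a‖ + 1 ≤ n :=
    (add_le_add_left (Nat.le_ceil ‖a‖) 1).trans (by exact_mod_cast hn)
  have hlow : 1 ≤ ‖(n : ℂ) + a‖ := by
    have := norm_sub_norm_le (n : ℂ) (-a)
    rw [sub_neg_eq_add, norm_neg, Complex.norm_natCast] at this
    linarith
  have hup : ‖(n : ℂ) + a‖ ≤ (‖a‖ + 1) * ((n : ℝ) + 1) := by
    have := norm_add_le (n : ℂ) a
    rw [Complex.norm_natCast] at this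
    nlinarith [norm_nonneg a, (n.cast_nonneg : (0 : ℝ) ≤ n)]
  calc ‖(((n : ℂ) + a) ^ s)⁻¹‖ ≤ Real.exp (Real.pi * |s.im|) * ‖(n : ℂ) + a‖ ^ ⌈|s.re|⌉₊ :=
        norm_inv_cpow_le_of_one_le_norm s hlow
    _ ≤ Real.exp (Real.pi * |s.im|) * ((‖a‖ + 1) * ((n : ℝ) + 1)) ^ ⌈|s.re|⌉₊ := by gcongr
    _ = _ := by rw [mul_pow, mul_assoc]

noncomputable def extBetaIntegrand (x y : ℂ) (p lam t : ℝ) : ℂ :=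
  (t : ℂ) ^ (x - 1) * ((1 : ℂ) - (t : ℂ)) ^ (y - 1) *
    mittagLeffler lam (-(p : ℂ) / ((t : ℂ) * (1 - (t : ℂ))))

section ExtBeta

variable (x y : ℂ) (p lam : ℝ)

lemma extBeta_eq_intervalIntegral :
    extBeta x y p lam = ∫ t in (0 : ℝ)..1, extBetaIntegrand x y p lam t := rfl

lemma extBetaIntegrand_add_natCast {t : ℝ} (ht : 0 < t) (n : ℕ) :
    extBetaIntegrand (x + n) y p lam t = (t : ℂ) ^ n * extBetaIntegrand x y p lam t := by
  have hpow : (t : ℂ) ^ (x + n - 1) = (t : ℂ) ^ n * (t : ℂ) ^ (x - 1) := by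
    rw [add_sub_right_comm, Complex.cpow_add _ _ (by exact_mod_cast ht.ne'),
      Complex.cpow_natCast, mul_comm]
  simp only [extBetaIntegrand, hpow]
  ring

lemma norm_extBetaIntegrand_add_natCast_le {t : ℝ} (ht : t ∈ Ioc 0 1) (n : ℕ) :
    ‖extBetaIntegrand (x + n) y p lam t‖ ≤ ‖extBetaIntegrand x y p lam t‖ := by
  rw [extBetaIntegrand_add_natCast x y p lam ht.1, norm_mul, norm_pow, Complex.norm_real,
    Real.norm_of_nonneg ht.1.le]
  exact mul_le_of_le_one_left (norm_nonneg _) (pow_le_one₀ ht.1.le ht.2)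

lemma norm_extBeta_add_natCast_le
    (h : IntervalIntegrable (extBetaIntegrand x y p lam) volume 0 1) (n : ℕ) :
    ‖extBeta (x + n) y p lam‖ ≤ ∫ t in (0 : ℝ)..1, ‖extBetaIntegrand x y p lam t‖ :=
  intervalIntegral.norm_integral_le_of_norm_le zero_le_one
    (Eventually.of_forall fun _ ht => norm_extBetaIntegrand_add_natCast_le x y p lam ht n) h.norm

lemma extBeta_add_natCast_eventually_bounded :
    ∃ C, ∀ᶠ n : ℕ in atTop, ‖extBeta (x + n) y p lam‖ ≤ C := by
  by_cases h : ∃ N : ℕ, IntervalIntegrable (extBetaIntegrand (x + N) y p lam) volume 0 1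
  · obtain ⟨N, hN⟩ := h
    refine ⟨∫ t in (0 : ℝ)..1, ‖extBetaIntegrand (x + N) y p lam t‖,
      eventually_atTop.2 ⟨N, fun n hn => ?_⟩⟩
    obtain ⟨k, rfl⟩ := Nat.exists_eq_add_of_le hn
    simpa only [Nat.cast_add, add_assoc] using norm_extBeta_add_natCast_le (x + N) y p lam hN k
  · push Not at h
    -- every integral is then the junk value `0`
    refine ⟨0, Eventually.of_forall fun n => ?_⟩
    rw [extBeta_eq_intervalIntegral, intervalIntegral.integral_undef (h n), norm_zero]

end ExtBeta

theorem extHLZeta_summable_general (p lam : ℝ) (γ σ a ϑ υ : ℂ) :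
    ∀ z : ℂ, ‖z‖ < 1 →
      Summable (fun n : ℕ =>
        ‖poch γ n * extBeta (ϑ + n) (υ - ϑ) p lam /
          (classicalBeta ϑ (υ - ϑ) * (n.factorial : ℂ)) * z ^ n /
          ((n : ℂ) + a) ^ σ‖) := by
  intro z hz
  set K := ⌈|σ.re|⌉₊
  obtain ⟨C, hC⟩ := extBeta_add_natCast_eventually_bounded ϑ (υ - ϑ) p lam
  have hmajorant := (summable_ascPochhammer_eval_div_factorial_mul ‖γ‖ ‖z‖ K
    (by rwa [abs_norm])).mul_left
      (C / ‖classicalBeta ϑ (υ - ϑ)‖ * (Real.exp (Real.pi * |σ.im|) * (‖a‖ + 1) ^ K))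
  apply Summable.norm
  refine hmajorant.of_norm_bounded_eventually_nat ?_
  filter_upwards [hC, eventually_norm_inv_natCast_add_cpow_le a σ] with n hCn hpow
  rw [div_eq_mul_inv _ (((n : ℂ) + a) ^ σ)]
  simp only [norm_mul, norm_div, norm_pow, Complex.norm_natCast]
  have hpoch := norm_ascPochhammer_eval_le γ n
  have hC0 : 0 ≤ C := (norm_nonneg _).trans hCn
  have hpoch0 : 0 ≤ (ascPochhammer ℝ n).eval ‖γ‖ := (norm_nonneg _).trans hpoch
  calc _ ≤ (ascPochhammer ℝ n).eval ‖γ‖ * C / (‖classicalBeta ϑ (υ - ϑ)‖ * n.factorial) *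
        ‖z‖ ^ n * (Real.exp (Real.pi * |σ.im|) * (‖a‖ + 1) ^ K * ((n : ℝ) + 1) ^ K) := by
        gcongr
        exact hpoch
    _ = _ := by ring

/-- absolute convergence of the series defining the extended
Hurwitz–Lerch zeta function. -/
theorem extHLZeta_summable (p lam : ℝ) (γ σ a ϑ υ : ℂ)
    (hp : 0 ≤ p) (hlam : 0 < lam) (ha : ∀ m : ℕ, a ≠ -(m : ℂ))
    (hϑ : 0 < ϑ.re) (hυϑ : ϑ.re < υ.re) :
    ∀ z : ℂ, ‖z‖ < 1 →
      Summable (fun n : ℕ =>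
        ‖poch γ n * extBeta (ϑ + n) (υ - ϑ) p lam /
          (classicalBeta ϑ (υ - ϑ) * (n.factorial : ℂ)) * z ^ n /
          ((n : ℂ) + a) ^ σ‖) :=
  extHLZeta_summable_general p lam γ σ a ϑ υ
end
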